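/- arXiv:2310.14062 — 3 statements merged into one kernel-verified Lean document; each statement's English description precedes it below -/
import Mathlib

section
/- Let R(ρ) = σ_W²·((√(1−ρ²) + (π − arccos ρ)·ρ)/π) + c, where σ_W² < 1 and c ∈ ℝ is a constant. Then for all ρ ∈ [−1, 1], the derivative of R satisfies |R'(ρ)| = σ_W²·(1 − arccos(ρ)/π) ≤ σ_W² < 1. -/
/-!
The product rule turns `(π - arccos ρ) ρ` into `ρ / √(1 - ρ²) + (π - arccos ρ)`, and the first
term cancels the derivative `-ρ / √(1 - ρ²)` of `√(1 - ρ²)`. What remains is `π - arccos ρ`,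
which lies in `[0, π]`, so after dividing by `π` the derivative is `σ_W²` times a factor in `[0, 1]`.
-/

open Real Set

theorem hasDerivAt_sqrt_one_sub_sq_add_pi_sub_arccos_mul {ρ : ℝ} (hρ : ρ ∈ Ioo (-1 : ℝ) 1) :
    HasDerivAt (fun x => √(1 - x ^ 2) + (π - arccos x) * x) (π - arccos ρ) ρ := by
  obtain ⟨hρ₁, hρ₂⟩ := hρ
  have hpos : 0 < 1 - ρ ^ 2 := by nlinarith
  have hsqrt : HasDerivAt (fun x => √(1 - x ^ 2)) (-(2 * ρ) / (2 * √(1 - ρ ^ 2))) ρ := by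
    have h : HasDerivAt (fun x => 1 - x ^ 2) (-(2 * ρ)) ρ := by
      simpa using (hasDerivAt_pow 2 ρ).const_sub 1
    exact h.sqrt hpos.ne'
  have harccos : HasDerivAt (fun x => π - arccos x) (1 / √(1 - ρ ^ 2)) ρ := by
    simpa using (hasDerivAt_arccos hρ₁.ne' hρ₂.ne).const_sub π
  refine (hsqrt.add (harccos.mul (hasDerivAt_id' ρ))).congr_deriv ?_
  have : √(1 - ρ ^ 2) ≠ 0 := (sqrt_pos.mpr hpos).ne'
  field_simp
  ring

theorem one_sub_arccos_div_pi_mem_Icc (x : ℝ) : 1 - arccos x / π ∈ Icc (0 : ℝ) 1 := by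
  have h₀ : 0 ≤ arccos x / π := div_nonneg (arccos_nonneg x) pi_pos.le
  have h₁ : arccos x / π ≤ 1 := (div_le_one pi_pos).mpr (arccos_le_pi x)
  constructor <;> linarith

theorem abs_mul_one_sub_arccos_div_pi_le {a : ℝ} (ha : 0 ≤ a) (x : ℝ) :
    |a * (1 - arccos x / π)| ≤ a := by
  obtain ⟨h₀, h₁⟩ := one_sub_arccos_div_pi_mem_Icc x
  rw [abs_of_nonneg (mul_nonneg ha h₀)]
  exact mul_le_of_le_one_right ha h₁

/-- The derivative of the dual-activation map for normalized ReLU with input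
injection is `σ_W² · (1 − arccos ρ / π)`, which is at most `σ_W² < 1` in absolute
value on the open interval `(−1, 1)`. -/
theorem stmt_0 (sW c : ℝ) (hsW0 : 0 ≤ sW) (hsW1 : sW < 1)
    (R : ℝ → ℝ)
    (hR : ∀ ρ, R ρ = sW * ((Real.sqrt (1 - ρ ^ 2) + (π - Real.arccos ρ) * ρ) / π) + c) :
    ∀ ρ ∈ Set.Ioo (-1 : ℝ) 1,
      HasDerivAt R (sW * (1 - Real.arccos ρ / π)) ρ ∧
      |sW * (1 - Real.arccos ρ / π)| ≤ sW ∧ sW < 1 := by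
  intro ρ hρ
  have hderiv : HasDerivAt R (sW * ((π - arccos ρ) / π)) ρ := by
    rw [funext hR]
    exact (((hasDerivAt_sqrt_one_sub_sq_add_pi_sub_arccos_mul hρ).div_const π).const_mul
      sW).add_const c
  rw [sub_div, div_self pi_ne_zero] at hderiv
  exact ⟨hderiv, abs_mul_one_sub_arccos_div_pi_le hsW0 ρ, hsW1⟩
end

section
/- Let R(ρ) = σ_W²·((√(1−ρ²) + (π − arccos ρ)·ρ)/π) + c with 0 < σ_W² < 1. Then R is a contraction on the interval [−1, c'] for any c' < 1 (i.e., |R(ρ) − R(ρ')| ≤ L·|ρ − ρ'| with L = σ_W²·(1 − arccos(c')/π) < 1 for all ρ, ρ' ∈ [−1, c']). -/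
open Real Set

/-! The map `R` is an affine image `σ_W² · k + c` of the normalized ReLU dual activation
`k ρ = (√(1 - ρ²) + (π - arccos ρ) ρ) / π`, whose derivative on `(-1, 1)` is the step-function
dual `1 - arccos ρ / π`. That derivative is nonnegative and increasing, so on `[-1, c']` it is
bounded by its value at `c'`, and the mean value inequality gives the Lipschitz bound. -/

noncomputable def reluDual (ρ : ℝ) : ℝ := (√(1 - ρ ^ 2) + (π - arccos ρ) * ρ) / π

theorem continuous_reluDual : Continuous reluDual := by
  unfold reluDual
  fun_prop

/- For `|x| > 1` this holds with Mathlib's junk values: `√(1 - ρ²)` is then locally `0` and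
`arccos` locally `0` or `π`. -/
theorem hasDerivAt_reluDual {x : ℝ} (h₁ : x ≠ -1) (h₂ : x ≠ 1) :
    HasDerivAt reluDual (1 - arccos x / π) x := by
  have hsq : 1 - x ^ 2 ≠ 0 := by
    rw [sub_ne_zero, ne_comm, Ne, sq_eq_one_iff, not_or]
    exact ⟨h₂, h₁⟩
  have hsqrt : HasDerivAt (fun ρ => √(1 - ρ ^ 2)) (1 / (2 * √(1 - x ^ 2)) * -(2 * x)) x :=
    (hasDerivAt_sqrt hsq).comp x (by simpa using (hasDerivAt_pow 2 x).const_sub 1)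
  have harccos : HasDerivAt (fun ρ => π - arccos ρ) (1 / √(1 - x ^ 2)) x := by
    simpa using (hasDerivAt_arccos h₁ h₂).const_sub π
  refine ((hsqrt.add (harccos.mul (hasDerivAt_id' x))).div_const π).congr_deriv ?_
  field_simp
  ring

theorem abs_reluDual_sub_le {c' : ℝ} (hc' : c' ≤ 1) {x y : ℝ} (hx : x ∈ Icc (-1) c')
    (hy : y ∈ Icc (-1) c') : |reluDual x - reluDual y| ≤ (1 - arccos c' / π) * |x - y| := by
  wlog hyx : y ≤ x generalizing x y
  · rw [abs_sub_comm, abs_sub_comm x]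
    exact this hy hx (le_of_not_ge hyx)
  have hderiv : ∀ z ∈ interior (Icc (-1) c'), HasDerivAt reluDual (1 - arccos z / π) z := by
    rw [interior_Icc]
    exact fun z hz => hasDerivAt_reluDual hz.1.ne' (hz.2.trans_le hc').ne
  have hmono : MonotoneOn reluDual (Icc (-1) c') :=
    monotoneOn_of_hasDerivWithinAt_nonneg (convex_Icc _ _) continuous_reluDual.continuousOn
      (fun z hz => (hderiv z hz).hasDerivWithinAt)
      (fun z _ => sub_nonneg.2 ((div_le_one pi_pos).2 (arccos_le_pi z)))
  have hderiv_le : ∀ z ∈ interior (Icc (-1) c'), deriv reluDual z ≤ 1 - arccos c' / π := by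
    intro z hz
    rw [(hderiv z hz).deriv]
    rw [interior_Icc] at hz
    gcongr
    exact hz.2.le
  rw [abs_of_nonneg (sub_nonneg.2 (hmono hy hx hyx)), abs_of_nonneg (sub_nonneg.2 hyx)]
  exact (convex_Icc _ _).image_sub_le_mul_sub_of_deriv_le continuous_reluDual.continuousOn
    (fun z hz => (hderiv z hz).differentiableAt.differentiableWithinAt) hderiv_le y hy x hx hyx

/-- The dual-activation map `R` for normalized ReLU with input injection is a
contraction on `[−1, c']` for any `c' < 1`, with Lipschitz constant
`L = σ_W² · (1 − arccos c' / π) < 1`. -/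
theorem stmt_1 (sW c c' : ℝ) (hsW0 : 0 < sW) (hsW1 : sW < 1) (hc' : c' < 1)
    (R : ℝ → ℝ)
    (hR : ∀ ρ, R ρ = sW * ((Real.sqrt (1 - ρ ^ 2) + (π - Real.arccos ρ) * ρ) / π) + c) :
    (∀ ρ ∈ Set.Icc (-1 : ℝ) c', ∀ ρ' ∈ Set.Icc (-1 : ℝ) c',
      |R ρ - R ρ'| ≤ sW * (1 - Real.arccos c' / π) * |ρ - ρ'|) ∧
    sW * (1 - Real.arccos c' / π) < 1 := by
  have hR' : ∀ ρ, R ρ = sW * reluDual ρ + c := hR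
  have harccos : 0 ≤ arccos c' / π := div_nonneg (arccos_nonneg c') pi_pos.le
  refine ⟨fun ρ hρ ρ' hρ' => ?_, by nlinarith [mul_nonneg hsW0.le harccos]⟩
  calc |R ρ - R ρ'| = sW * |reluDual ρ - reluDual ρ'| := by
        rw [hR', hR', add_sub_add_right_eq_sub, ← mul_sub, abs_mul, abs_of_pos hsW0]
    _ ≤ sW * ((1 - arccos c' / π) * |ρ - ρ'|) := by
        gcongr
        exact abs_reluDual_sub_le hc'.le hρ hρ'
    _ = sW * (1 - arccos c' / π) * |ρ - ρ'| := (mul_assoc _ _ _).symm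
end

section
/- For (u,v) jointly Gaussian with mean zero, unit variances, and correlation ρ ∈ [−1,1], and σ(t) = √2·max(0,t) the normalized ReLU, one has E[σ(u)σ(v)] = (√(1−ρ²) + (π − arccos ρ)·ρ)/π. -/
/-!
Write `ρ = cos α` with `α = arccos ρ ∈ [0, π]`, so that `√(1 - ρ²) = sin α`. In polar coordinates
`z = r (cos θ, sin θ)` the second argument becomes `r cos (θ - α)`, and the positive homogeneity of
`max 0` splits the expectation into the radial moment `∫ r³ e^{-r²/2} dr = 2` times the angular
integral of `max 0 (cos θ) * max 0 (cos (θ - α))`, whose integrand is supported on the arc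
`[α - π/2, π/2]` of length `π - α`.
-/

open Real MeasureTheory ProbabilityTheory Set
open scoped NNReal

lemma integral_gaussianReal_prod_eq_integral_smul {E : Type*} [NormedAddCommGroup E]
    [NormedSpace ℝ E] {μ₁ μ₂ : ℝ} {v₁ v₂ : ℝ≥0} (hv₁ : v₁ ≠ 0) (hv₂ : v₂ ≠ 0)
    (f : ℝ × ℝ → E) :
    ∫ z, f z ∂(gaussianReal μ₁ v₁).prod (gaussianReal μ₂ v₂) =
      ∫ z, (gaussianPDFReal μ₁ v₁ z.1 * gaussianPDFReal μ₂ v₂ z.2) • f z := by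
  rw [gaussianReal_of_var_ne_zero _ hv₁, gaussianReal_of_var_ne_zero _ hv₂,
    prod_withDensity (measurable_gaussianPDF _ _) (measurable_gaussianPDF _ _),
    integral_withDensity_eq_integral_toReal_smul (by fun_prop)
      (ae_of_all _ fun _ ↦ ENNReal.mul_lt_top gaussianPDF_lt_top gaussianPDF_lt_top),
    ← Measure.volume_eq_prod]
  simp [gaussianPDF, ENNReal.toReal_mul, gaussianPDFReal_nonneg]

lemma gaussianPDFReal_mul_gaussianPDFReal_polar (r θ : ℝ) :
    gaussianPDFReal 0 1 (r * cos θ) * gaussianPDFReal 0 1 (r * sin θ) =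
      (2 * π)⁻¹ * exp (-(r ^ 2 / 2)) := by
  have hsq : (√(2 * π)) ^ 2 = 2 * π := sq_sqrt (by positivity)
  simp only [gaussianPDFReal, NNReal.coe_one, mul_one, sub_zero]
  rw [← mul_mul_mul_comm, ← exp_add, ← mul_inv, ← sq, hsq]
  congr 2
  linear_combination (-(r ^ 2 / 2)) * sin_sq_add_cos_sq θ

lemma integral_gaussianReal_prod_eq_integral_polar {E : Type*} [NormedAddCommGroup E]
    [NormedSpace ℝ E] (f : ℝ × ℝ → E) :
    ∫ z, f z ∂(gaussianReal 0 1).prod (gaussianReal 0 1) =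
      (2 * π)⁻¹ • ∫ p in Ioi 0 ×ˢ Ioo (-π) π,
        (p.1 * exp (-(p.1 ^ 2 / 2))) • f (p.1 * cos p.2, p.1 * sin p.2) := by
  rw [integral_gaussianReal_prod_eq_integral_smul one_ne_zero one_ne_zero,
    ← integral_comp_polarCoord_symm, ← integral_smul]
  refine setIntegral_congr_fun polarCoord.open_target.measurableSet fun p _ ↦ ?_
  simp only [polarCoord_symm_apply, smul_smul, gaussianPDFReal_mul_gaussianPDFReal_polar]
  ring_nf

lemma integral_pow_three_mul_exp_neg_sq_div_two :
    ∫ r in Ioi (0 : ℝ), r ^ 3 * exp (-(r ^ 2 / 2)) = 2 := by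
  have h := integral_rpow_mul_exp_neg_mul_rpow (p := 2) (q := 3) (b := 1 / 2)
    two_pos (by norm_num) (by norm_num)
  norm_num [Gamma_two] at h
  simpa only [one_div, inv_mul_eq_div] using h

lemma hasDerivAt_antideriv_cos_mul_cos_sub (α θ : ℝ) :
    HasDerivAt (fun t ↦ t * cos α / 2 + sin (2 * t - α) / 4) (cos θ * cos (θ - α)) θ := by
  refine ((((hasDerivAt_id' θ).mul_const (cos α)).div_const 2).add
    ((((hasDerivAt_id' θ).const_mul 2).sub_const α).sin.div_const 4)).congr_deriv ?_
  have h2 : cos (2 * θ - α) = cos θ * cos (θ - α) - sin θ * sin (θ - α) := by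
    rw [← cos_add]; ring_nf
  have hα : cos α = cos θ * cos (θ - α) + sin θ * sin (θ - α) := by
    rw [← cos_sub]; ring_nf
  rw [h2]
  linear_combination hα / 2

lemma max_zero_cos_mul_max_zero_cos_sub_eq_indicator {α θ : ℝ} (hα₀ : 0 ≤ α) (hαπ : α ≤ π)
    (hθ : θ ∈ Ioo (-π) π) :
    max 0 (cos θ) * max 0 (cos (θ - α)) =
      (Icc (α - π / 2) (π / 2)).indicator (fun t ↦ cos t * cos (t - α)) θ := by
  obtain ⟨hθ₁, hθ₂⟩ := hθ
  by_cases h : θ ∈ Icc (α - π / 2) (π / 2)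
  · rw [indicator_of_mem h, max_eq_right (cos_nonneg_of_mem_Icc ⟨by linarith [h.1], h.2⟩),
      max_eq_right (cos_nonneg_of_mem_Icc ⟨by linarith [h.1], by linarith [h.2]⟩)]
  · rw [indicator_of_notMem h]
    rw [mem_Icc, not_and_or, not_le, not_le] at h
    rcases h with h | h
    · rcases le_or_gt θ (-(π / 2)) with hθ | hθ
      · have : cos θ ≤ 0 := by
          rw [← cos_neg]; exact cos_nonpos_of_pi_div_two_le_of_le (by linarith) (by linarith)
        simp [this]
      · have : cos (θ - α) ≤ 0 := by
          rw [← cos_neg]; exact cos_nonpos_of_pi_div_two_le_of_le (by linarith) (by linarith)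
        simp [this]
    · simp [cos_nonpos_of_pi_div_two_le_of_le h.le (by linarith)]

lemma integral_max_zero_cos_mul_max_zero_cos_sub {α : ℝ} (hα₀ : 0 ≤ α) (hαπ : α ≤ π) :
    ∫ θ in Ioo (-π) π, max 0 (cos θ) * max 0 (cos (θ - α)) =
      ((π - α) * cos α + sin α) / 2 := by
  have hsub : Icc (α - π / 2) (π / 2) ⊆ Ioo (-π) π :=
    Icc_subset_Ioo (by linarith [pi_pos]) (by linarith [pi_pos])
  rw [setIntegral_congr_fun measurableSet_Ioo fun θ hθ ↦
      max_zero_cos_mul_max_zero_cos_sub_eq_indicator hα₀ hαπ hθ,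
    integral_indicator measurableSet_Icc, Measure.restrict_restrict measurableSet_Icc,
    inter_eq_left.mpr hsub, integral_Icc_eq_integral_Ioc,
    ← intervalIntegral.integral_of_le (by linarith),
    intervalIntegral.integral_eq_sub_of_hasDerivAt
      (fun θ _ ↦ hasDerivAt_antideriv_cos_mul_cos_sub α θ)
      ((by fun_prop : Continuous _).intervalIntegrable _ _)]
  have h₁ : sin (2 * (π / 2) - α) = sin α := by rw [← sin_pi_sub]; ring_nf
  have h₂ : sin (2 * (α - π / 2) - α) = -sin α := by
    rw [show 2 * (α - π / 2) - α = -(π - α) by ring, sin_neg, sin_pi_sub]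
  rw [h₁, h₂]
  ring

lemma sqrt_two_mul_max_zero_mul_polar {α r : ℝ} (hr : 0 ≤ r) (θ : ℝ) :
    (√2 * max 0 (r * cos θ)) * (√2 * max 0 (cos α * (r * cos θ) + sin α * (r * sin θ))) =
      2 * r ^ 2 * (max 0 (cos θ) * max 0 (cos (θ - α))) := by
  have hrot : cos α * (r * cos θ) + sin α * (r * sin θ) = r * cos (θ - α) := by
    rw [cos_sub]; ring
  have hmax : ∀ x, max 0 (r * x) = r * max 0 x := fun x ↦ by
    rw [mul_max_of_nonneg _ _ hr, mul_zero]
  rw [hrot, hmax, hmax]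
  linear_combination (r ^ 2 * max 0 (cos θ) * max 0 (cos (θ - α))) * sq_sqrt zero_le_two

lemma integral_sqrt_two_mul_max_zero_mul_rotation {α : ℝ} (hα₀ : 0 ≤ α) (hαπ : α ≤ π) :
    ∫ z : ℝ × ℝ, (√2 * max 0 z.1) * (√2 * max 0 (cos α * z.1 + sin α * z.2))
        ∂(gaussianReal 0 1).prod (gaussianReal 0 1) =
      (sin α + (π - α) * cos α) / π := by
  have hpolar : ∀ p ∈ Ioi (0 : ℝ) ×ˢ Ioo (-π) π,
      (p.1 * exp (-(p.1 ^ 2 / 2))) •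
          ((√2 * max 0 (p.1 * cos p.2)) *
            (√2 * max 0 (cos α * (p.1 * cos p.2) + sin α * (p.1 * sin p.2)))) =
        (p.1 ^ 3 * exp (-(p.1 ^ 2 / 2))) * (2 * (max 0 (cos p.2) * max 0 (cos (p.2 - α)))) := by
    rintro ⟨r, θ⟩ ⟨hr, -⟩
    rw [smul_eq_mul, sqrt_two_mul_max_zero_mul_polar (le_of_lt hr)]
    ring
  rw [integral_gaussianReal_prod_eq_integral_polar,
    setIntegral_congr_fun (measurableSet_Ioi.prod measurableSet_Ioo) hpolar,
    Measure.volume_eq_prod,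
    setIntegral_prod_mul (fun r ↦ r ^ 3 * exp (-(r ^ 2 / 2)))
      (fun θ ↦ 2 * (max 0 (cos θ) * max 0 (cos (θ - α)))),
    integral_pow_three_mul_exp_neg_sq_div_two, integral_const_mul,
    integral_max_zero_cos_mul_max_zero_cos_sub hα₀ hαπ, smul_eq_mul]
  field_simp
  ring

/-- Arc-cosine kernel identity of Cho and Saul: for `(u,v)` jointly Gaussian,
mean zero, unit variances, correlation `ρ`, and `σ(t) = √2 · max(0,t)`,
`E[σ(u)σ(v)] = (√(1−ρ²) + (π − arccos ρ)·ρ)/π`. The joint Gaussian is realized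
as `(z₁, ρ·z₁ + √(1−ρ²)·z₂)` for independent standard Gaussians `z₁, z₂`. -/
theorem stmt_3 (ρ : ℝ) (hρ : ρ ∈ Set.Icc (-1 : ℝ) 1) :
    ∫ z : ℝ × ℝ,
        (Real.sqrt 2 * max 0 z.1) *
          (Real.sqrt 2 * max 0 (ρ * z.1 + Real.sqrt (1 - ρ ^ 2) * z.2))
        ∂((gaussianReal 0 1).prod (gaussianReal 0 1)) =
      (Real.sqrt (1 - ρ ^ 2) + (π - Real.arccos ρ) * ρ) / π := by
  have h := integral_sqrt_two_mul_max_zero_mul_rotation (arccos_nonneg ρ) (arccos_le_pi ρ)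
  rwa [cos_arccos hρ.1 hρ.2, sin_arccos] at h
end
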